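/- arXiv:1407.1593 — 3 statements merged into one kernel-verified Lean document; each statement's English description precedes it below -/
import Mathlib

section
/- Every real 2×2×2 tensor has rank at most 3 over the real field: for every tensor A of size 2×2×2 there exist vectors a₁, a₂, a₃ ∈ ℝ², b₁, b₂, b₃ ∈ ℝ², c₁, c₂, c₃ ∈ ℝ² such that A = a₁ ∘ b₁ ∘ c₁ + a₂ ∘ b₂ ∘ c₂ + a₃ ∘ b₃ ∘ c₃ (entrywise equality of tensors). -/
lemma aux_rank_one (P : Fin 2 → Fin 2 → ℝ) (h : P 0 0 * P 1 1 - P 0 1 * P 1 0 = 0) :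
    ∃ u v : Fin 2 → ℝ, ∀ i j, P i j = u i * v j := by
  by_cases h00 : P 0 0 = 0
  · by_cases h01 : P 0 1 = 0
    · exact ⟨![0, 1], ![P 1 0, P 1 1], by
        intro i j; fin_cases i <;> fin_cases j <;> simp [h00, h01]⟩
    · have h10 : P 1 0 = 0 := by
        rw [h00] at h
        rcases mul_eq_zero.mp (by linarith : P 0 1 * P 1 0 = 0) with h' | h'
        · exact absurd h' h01
        · exact h'
      exact ⟨![P 0 1, P 1 1], ![0, 1], by
        intro i j; fin_cases i <;> fin_cases j <;> simp [h00, h10]⟩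
  · exact ⟨![P 0 0, P 1 0], ![1, P 0 1 / P 0 0], by
      intro i j; fin_cases i <;> fin_cases j <;> simp <;> field_simp <;> nlinarith [h]⟩

lemma aux_pencil (P Q : Fin 2 → Fin 2 → ℝ) (dp dq m : ℝ)
    (hdp : dp = P 0 0 * P 1 1 - P 0 1 * P 1 0)
    (hdq : dq = Q 0 0 * Q 1 1 - Q 0 1 * Q 1 0)
    (hm : m = P 0 0 * Q 1 1 + P 1 1 * Q 0 0 - P 0 1 * Q 1 0 - P 1 0 * Q 0 1)
    (h : m ^ 2 - 4 * dp * dq > 0) :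
    ∃ u1 v1 u2 v2 : Fin 2 → ℝ, ∃ x1 x2 y1 y2 : ℝ,
      (∀ i j, P i j = x1 * u1 i * v1 j + x2 * u2 i * v2 j) ∧
      (∀ i j, Q i j = y1 * u1 i * v1 j + y2 * u2 i * v2 j) := by
  by_cases h0 : dp = 0
  · have hm0 : m ≠ 0 := by
      intro hm0; rw [hm0, h0] at h; norm_num at h
    have h0' : P 0 0 * P 1 1 - P 0 1 * P 1 0 = 0 := by rw [← hdp]; exact h0
    obtain ⟨u1, v1, hM1⟩ := aux_rank_one P h0'
    obtain ⟨u2, v2, hM2⟩ := aux_rank_one (fun i j => dq * P i j - m * Q i j) (by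
      linear_combination dq ^ 2 * h0' + dq * m * hm - m ^ 2 * hdq)
    refine ⟨u1, v1, u2, v2, 1, 0, dq / m, -(1 / m), ?_, ?_⟩
    · intro i j
      linear_combination hM1 i j
    · intro i j
      have e1 := hM1 i j
      have e2 := hM2 i j
      have hQ : Q i j = (dq * (u1 i * v1 j) - u2 i * v2 j) / m := by
        rw [eq_div_iff hm0]
        linear_combination dq * e1 - e2
      rw [hQ]; ring
  · set r := Real.sqrt (m ^ 2 - 4 * dp * dq) with hr_def
    have hr2 : r ^ 2 = m ^ 2 - 4 * dp * dq := Real.sq_sqrt (by linarith)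
    have hrpos : 0 < r := by
      nlinarith [Real.sqrt_nonneg (m ^ 2 - 4 * dp * dq), hr2]
    have hr0 : r ≠ 0 := ne_of_gt hrpos
    obtain ⟨l1, hl1⟩ : ∃ x : ℝ, 2 * dp * x = -m + r :=
      ⟨(-m + r) / (2 * dp), by field_simp⟩
    obtain ⟨l2, hl2⟩ : ∃ x : ℝ, 2 * dp * x = -m - r :=
      ⟨(-m - r) / (2 * dp), by field_simp⟩
    have hroot1 : dp * l1 ^ 2 + m * l1 + dq = 0 := by
      have h4 : 4 * dp * (dp * l1 ^ 2 + m * l1 + dq) = 0 := by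
        linear_combination (2 * dp * l1 + m + r) * hl1 + hr2
      rcases mul_eq_zero.mp h4 with h' | h'
      · exact absurd h' (by simp [h0])
      · exact h'
    have hroot2 : dp * l2 ^ 2 + m * l2 + dq = 0 := by
      have h4 : 4 * dp * (dp * l2 ^ 2 + m * l2 + dq) = 0 := by
        linear_combination (2 * dp * l2 + m - r) * hl2 + hr2
      rcases mul_eq_zero.mp h4 with h' | h'
      · exact absurd h' (by simp [h0])
      · exact h'
    have hsub : 2 * dp * (l1 - l2) = 2 * r := by linear_combination hl1 - hl2
    obtain ⟨u1, v1, hM1⟩ := aux_rank_one (fun i j => l1 * P i j + Q i j) (by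
      linear_combination hroot1 - l1 ^ 2 * hdp - l1 * hm - hdq)
    obtain ⟨u2, v2, hM2⟩ := aux_rank_one (fun i j => l2 * P i j + Q i j) (by
      linear_combination hroot2 - l2 ^ 2 * hdp - l2 * hm - hdq)
    refine ⟨u1, v1, u2, v2, dp / r, -(dp / r), -(l2 * dp / r), l1 * dp / r, ?_, ?_⟩
    · intro i j
      have e1 := hM1 i j
      have e2 := hM2 i j
      have hP : P i j = (dp * (u1 i * v1 j) - dp * (u2 i * v2 j)) / r := by
        rw [eq_div_iff hr0]
        linear_combination dp * e1 - dp * e2 - (P i j / 2) * hsub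
      rw [hP]; ring
    · intro i j
      have e1 := hM1 i j
      have e2 := hM2 i j
      have hQ : Q i j = (-(l2 * dp) * (u1 i * v1 j) + l1 * dp * (u2 i * v2 j)) / r := by
        rw [eq_div_iff hr0]
        linear_combination (-(l2 * dp)) * e1 + l1 * dp * e2 - (Q i j / 2) * hsub
      rw [hQ]; ring
lemma aux_gamma (dp dq m s1 s2 : ℝ) (hdq : dq ≠ 0) (hs1 : 0 < s1)
    (h : m ^ 2 - 4 * dp * dq < 0) :
    ∃ g : ℝ, (m - g * s2) ^ 2 - 4 * (dp - g * s1) * dq > 0 := by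
  by_cases hs2 : s2 = 0
  · obtain ⟨g, hg⟩ : ∃ x : ℝ, 4 * s1 * dq * x = 1 - (m ^ 2 - 4 * dp * dq) :=
      ⟨(1 - (m ^ 2 - 4 * dp * dq)) / (4 * s1 * dq), by field_simp⟩
    refine ⟨g, ?_⟩
    have : (m - g * s2) ^ 2 - 4 * (dp - g * s1) * dq = 1 := by
      rw [hs2]; linear_combination hg
    linarith
  · set c := 2 * m * s2 - 4 * s1 * dq with hc
    set disc := m ^ 2 - 4 * dp * dq with hdisc
    set G := c ^ 2 + disc ^ 2 + s2 ^ 2 + 1 with hG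
    have hs2sq : 0 < s2 ^ 2 := by positivity
    obtain ⟨g, hg⟩ : ∃ x : ℝ, s2 ^ 2 * x = G := ⟨G / s2 ^ 2, by field_simp⟩
    refine ⟨g, ?_⟩
    have key : ((m - g * s2) ^ 2 - 4 * (dp - g * s1) * dq) * s2 ^ 2
        = G ^ 2 - c * G + disc * s2 ^ 2 := by
      linear_combination (s2 ^ 2 * g + G - c) * hg
    have hG1 : G - c ≥ disc ^ 2 + s2 ^ 2 + 3 / 4 := by
      nlinarith [sq_nonneg (2 * c - 1)]
    have hG0 : G ≥ s2 ^ 2 + 1 := by nlinarith [sq_nonneg c, sq_nonneg disc]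
    have hpos : ((m - g * s2) ^ 2 - 4 * (dp - g * s1) * dq) * s2 ^ 2 > 0 := by
      rw [key]
      nlinarith [hG1, hG0, h, hs2sq, sq_nonneg (2 * disc + 1), mul_pos hs2sq hs2sq]
    nlinarith [hpos, hs2sq]
lemma aux_key (P Q : Fin 2 → Fin 2 → ℝ) :
    ∃ a b c : Fin 3 → Fin 2 → ℝ,
      (∀ i j, P i j = ∑ t : Fin 3, a t i * b t j * c t 0) ∧
      (∀ i j, Q i j = ∑ t : Fin 3, a t i * b t j * c t 1) := by
  by_cases hdp : P 0 0 * P 1 1 - P 0 1 * P 1 0 = 0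
  · -- P is rank one
    obtain ⟨u, v, huv⟩ := aux_rank_one P hdp
    refine ⟨![u, fun i => Q i 0, fun i => Q i 1], ![v, ![1, 0], ![0, 1]],
      ![![1, 0], ![0, 1], ![0, 1]], ?_, ?_⟩
    · intro i j
      fin_cases j <;> simp [Fin.sum_univ_three, Matrix.vecHead, Matrix.vecTail, ← huv]
    · intro i j
      fin_cases j <;> simp [Fin.sum_univ_three, Matrix.vecHead, Matrix.vecTail]
  by_cases hdq : Q 0 0 * Q 1 1 - Q 0 1 * Q 1 0 = 0
  · -- Q is rank one
    obtain ⟨u, v, huv⟩ := aux_rank_one Q hdq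
    refine ⟨![u, fun i => P i 0, fun i => P i 1], ![v, ![1, 0], ![0, 1]],
      ![![0, 1], ![1, 0], ![1, 0]], ?_, ?_⟩
    · intro i j
      fin_cases j <;> simp [Fin.sum_univ_three, Matrix.vecHead, Matrix.vecTail]
    · intro i j
      fin_cases j <;> simp [Fin.sum_univ_three, Matrix.vecHead, Matrix.vecTail, ← huv]
  by_cases hd : 0 ≤ (P 0 0 * Q 1 1 + P 1 1 * Q 0 0 - P 0 1 * Q 1 0 - P 1 0 * Q 0 1) ^ 2
      - 4 * (P 0 0 * P 1 1 - P 0 1 * P 1 0) * (Q 0 0 * Q 1 1 - Q 0 1 * Q 1 0)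
  · -- pencil has a real root
    set r := Real.sqrt ((P 0 0 * Q 1 1 + P 1 1 * Q 0 0 - P 0 1 * Q 1 0 - P 1 0 * Q 0 1) ^ 2
      - 4 * (P 0 0 * P 1 1 - P 0 1 * P 1 0) * (Q 0 0 * Q 1 1 - Q 0 1 * Q 1 0)) with hr_def
    have hr2 : r ^ 2 = (P 0 0 * Q 1 1 + P 1 1 * Q 0 0 - P 0 1 * Q 1 0 - P 1 0 * Q 0 1) ^ 2
      - 4 * (P 0 0 * P 1 1 - P 0 1 * P 1 0) * (Q 0 0 * Q 1 1 - Q 0 1 * Q 1 0) :=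
      Real.sq_sqrt hd
    obtain ⟨l, hl⟩ : ∃ x : ℝ, 2 * (P 0 0 * P 1 1 - P 0 1 * P 1 0) * x
        = -(P 0 0 * Q 1 1 + P 1 1 * Q 0 0 - P 0 1 * Q 1 0 - P 1 0 * Q 0 1) + r :=
      ⟨(-(P 0 0 * Q 1 1 + P 1 1 * Q 0 0 - P 0 1 * Q 1 0 - P 1 0 * Q 0 1) + r)
        / (2 * (P 0 0 * P 1 1 - P 0 1 * P 1 0)), by field_simp⟩
    have hroot : (P 0 0 * P 1 1 - P 0 1 * P 1 0) * l ^ 2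
        + (P 0 0 * Q 1 1 + P 1 1 * Q 0 0 - P 0 1 * Q 1 0 - P 1 0 * Q 0 1) * l
        + (Q 0 0 * Q 1 1 - Q 0 1 * Q 1 0) = 0 := by
      have h4 : 4 * (P 0 0 * P 1 1 - P 0 1 * P 1 0) * ((P 0 0 * P 1 1 - P 0 1 * P 1 0) * l ^ 2
        + (P 0 0 * Q 1 1 + P 1 1 * Q 0 0 - P 0 1 * Q 1 0 - P 1 0 * Q 0 1) * l
        + (Q 0 0 * Q 1 1 - Q 0 1 * Q 1 0)) = 0 := by
        linear_combination (2 * (P 0 0 * P 1 1 - P 0 1 * P 1 0) * l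
          + (P 0 0 * Q 1 1 + P 1 1 * Q 0 0 - P 0 1 * Q 1 0 - P 1 0 * Q 0 1) + r) * hl + hr2
      rcases mul_eq_zero.mp h4 with h' | h'
      · exact absurd h' (by simp [hdp])
      · exact h'
    have hl0 : l ≠ 0 := by
      intro h0
      rw [h0] at hroot
      apply hdq
      linarith [hroot]
    obtain ⟨u, v, hM⟩ := aux_rank_one (fun i j => l * P i j + Q i j) (by
      linear_combination hroot)
    refine ⟨![u, fun i => Q i 0, fun i => Q i 1], ![v, ![1, 0], ![0, 1]],
      ![![1 / l, 0], ![-(1 / l), 1], ![-(1 / l), 1]], ?_, ?_⟩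
    · intro i j
      fin_cases j
      · have e := hM i 0
        have hPij : P i 0 = (u i * v 0 - Q i 0) / l := by
          rw [eq_div_iff hl0]; linear_combination e
        simp [Fin.sum_univ_three, Matrix.vecHead, Matrix.vecTail]
        rw [hPij]; ring
      · have e := hM i 1
        have hPij : P i 1 = (u i * v 1 - Q i 1) / l := by
          rw [eq_div_iff hl0]; linear_combination e
        simp [Fin.sum_univ_three, Matrix.vecHead, Matrix.vecTail]
        rw [hPij]; ring
    · intro i j
      fin_cases j <;> simp [Fin.sum_univ_three, Matrix.vecHead, Matrix.vecTail]
  · -- hard case: perturb P by a rank-one matrix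
    push_neg at hd
    have hs1 : 0 < P 1 1 ^ 2 + P 1 0 ^ 2 := by
      rcases eq_or_ne (P 1 1) 0 with h11 | h11
      · rcases eq_or_ne (P 1 0) 0 with h10 | h10
        · exact absurd (by rw [h11, h10]; ring) hdp
        · positivity
      · positivity
    obtain ⟨g, hg⟩ := aux_gamma (P 0 0 * P 1 1 - P 0 1 * P 1 0)
      (Q 0 0 * Q 1 1 - Q 0 1 * Q 1 0)
      (P 0 0 * Q 1 1 + P 1 1 * Q 0 0 - P 0 1 * Q 1 0 - P 1 0 * Q 0 1)
      (P 1 1 ^ 2 + P 1 0 ^ 2) (P 1 1 * Q 1 1 + P 1 0 * Q 1 0) hdq hs1 hd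
    set v3 : Fin 2 → ℝ := ![P 1 1, -(P 1 0)] with hv3
    set u3 : Fin 2 → ℝ := ![1, 0] with hu3
    set P' : Fin 2 → Fin 2 → ℝ := fun i j => P i j - g * u3 i * v3 j with hP'def
    have hP'00 : P' 0 0 = P 0 0 - g * P 1 1 := by simp [hP'def, hu3, hv3]
    have hP'01 : P' 0 1 = P 0 1 + g * P 1 0 := by simp [hP'def, hu3, hv3, Matrix.vecHead, Matrix.vecTail]; try ring
    have hP'10 : P' 1 0 = P 1 0 := by simp [hP'def, hu3, hv3]
    have hP'11 : P' 1 1 = P 1 1 := by simp [hP'def, hu3, hv3]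
    obtain ⟨u1, v1, u2, v2, x1, x2, y1, y2, hP'eq, hQeq⟩ :=
      aux_pencil P' Q
        ((P 0 0 * P 1 1 - P 0 1 * P 1 0) - g * (P 1 1 ^ 2 + P 1 0 ^ 2))
        (Q 0 0 * Q 1 1 - Q 0 1 * Q 1 0)
        ((P 0 0 * Q 1 1 + P 1 1 * Q 0 0 - P 0 1 * Q 1 0 - P 1 0 * Q 0 1)
          - g * (P 1 1 * Q 1 1 + P 1 0 * Q 1 0))
        (by rw [hP'00, hP'01, hP'10, hP'11]; ring) rfl
        (by rw [hP'00, hP'01, hP'10, hP'11]; ring)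
        (by linear_combination hg)
    refine ⟨![u1, u2, u3], ![v1, v2, v3], ![![x1, y1], ![x2, y2], ![g, 0]], ?_, ?_⟩
    · intro i j
      have e := hP'eq i j
      rw [hP'def] at e
      simp only at e
      simp [Fin.sum_univ_three, Matrix.vecHead, Matrix.vecTail]
      linarith [e]
    · intro i j
      have e := hQeq i j
      simp [Fin.sum_univ_three, Matrix.vecHead, Matrix.vecTail]
      linarith [e]

/-- Every real 2×2×2 tensor has rank at most 3 over the real field. -/
theorem rank_le_three_of_two_two_two (A : Fin 2 × Fin 2 × Fin 2 → ℝ) :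
    ∃ (a b c : Fin 3 → Fin 2 → ℝ),
      ∀ (i j k : Fin 2), A (i, j, k) = ∑ t : Fin 3, a t i * b t j * c t k := by
  obtain ⟨a, b, c, h1, h2⟩ := aux_key (fun i j => A (i, j, 0)) (fun i j => A (i, j, 1))
  refine ⟨a, b, c, fun i j k => ?_⟩
  fin_cases k
  · simpa using h1 i j
  · simpa using h2 i j
end

section
/- Let d ≥ 2 and let n₁, …, n_d be positive natural numbers. Set N = ∏_{k=1}^{d-1} min(n_k, n_{k+1}·n_{k+2}⋯n_d). Then every d-way real tensor A of size n₁×⋯×n_d can be written as A = ∑_{j=1}^N σ_j · (a_{1,j} ∘ a_{2,j} ∘ ⋯ ∘ a_{d,j}), where each σ_j ≥ 0, each mode vector a_{k,j} ∈ ℝ^{n_k} has Euclidean norm 1, and the N rank-1 tensors a_{1,j} ∘ ⋯ ∘ a_{d,j} are pairwise orthogonal with respect to the tensor inner product. In particular, the orthogonal rank of A (the minimal number of pairwise orthogonal rank-1 tensors summing to A) is at most N. -/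
/-!
Unfold `A` along its first mode into an `n₁ × (n₂⋯n_d)` matrix. Gram–Schmidt applied to its first
`n₁` columns (padded with zeros if there are fewer) yields an orthonormal basis of `ℝ^{n₁}` in which
every column has nonzero coordinates only among the first `min(n₁, n₂⋯n_d)` basis vectors; so the
matrix is `∑ₛ uₛ wₛᵀ` with orthonormal `uₛ` and that many terms. Decomposing each `wₛ`, a
`(d-1)`-way tensor, recursively and multiplying out gives the decomposition of `A`. Its terms are
orthogonal because the inner product of two rank-1 tensors is the product of the inner products of
their mode vectors: two terms either have orthogonal first modes `uₛ ⟂ uₛ'`, or come from the same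
recursive decomposition.
-/

open Finset InnerProductSpace

theorem sum_prod_mul_prod_eq_prod_sum_mul {R ι : Type*} [CommSemiring R] [Fintype ι]
    [DecidableEq ι] {κ : ι → Type*} [∀ i, Fintype (κ i)] (f g : ∀ i, κ i → R) :
    ∑ x : ∀ i, κ i, (∏ i, f i (x i)) * ∏ i, g i (x i) = ∏ i, ∑ y, f i y * g i y := by
  simp only [Fintype.prod_sum, prod_mul_distrib]

theorem Orthonormal.sum_mul_eq_ite {ι J : Type*} [Fintype ι] [DecidableEq J]
    {u : J → EuclideanSpace ℝ ι} (hu : Orthonormal ℝ u) (s t : J) :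
    ∑ x, u s x * u t x = if s = t then 1 else 0 := by
  rw [← orthonormal_iff_ite.1 hu s t]
  simp [PiLp.inner_apply, mul_comm]

theorem exists_norm_eq_one_and_eq_norm_smul {E : Type*} [NormedAddCommGroup E] [NormedSpace ℝ E]
    [Nontrivial E] (v : E) : ∃ u : E, ‖u‖ = 1 ∧ v = ‖v‖ • u := by
  by_cases hv : v = 0
  · obtain ⟨u, hu⟩ := exists_norm_eq E zero_le_one
    exact ⟨u, hu, by simp [hv]⟩
  · exact ⟨‖v‖⁻¹ • v, norm_smul_inv_norm hv, by rw [smul_inv_smul₀ (norm_ne_zero_iff.2 hv)]⟩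

theorem Fin.sum_castLE_eq_sum_of_eq_zero {M : Type*} [AddCommMonoid M] {k m : ℕ} (h : k ≤ m)
    (g : Fin m → M) (hg : ∀ j : Fin m, k ≤ j → g j = 0) :
    ∑ s : Fin k, g (s.castLE h) = ∑ j, g j := by
  rw [← sum_subset (subset_univ (univ.map (Fin.castLEEmb h))), sum_map]
  · rfl
  intro j _ hj
  exact hg j (not_lt.1 fun hjk => hj (mem_map.2 ⟨⟨j, hjk⟩, mem_univ _, rfl⟩))

theorem exists_orthonormal_factorization {m : ℕ} {Y : Type*} [Fintype Y] (M : Fin m → Y → ℝ) :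
    ∃ (u : Fin (min m (Fintype.card Y)) → EuclideanSpace ℝ (Fin m))
      (w : Fin (min m (Fintype.card Y)) → Y → ℝ),
      Orthonormal ℝ u ∧ ∀ x y, M x y = ∑ s, u s x * w s y := by
  let e := Fintype.equivFin Y
  let col : Y → EuclideanSpace ℝ (Fin m) := fun y => WithLp.toLp 2 (M · y)
  let f : Fin m → EuclideanSpace ℝ (Fin m) :=
    fun j => if h : (j : ℕ) < Fintype.card Y then col (e.symm ⟨j, h⟩) else 0
  let b := gramSchmidtOrthonormalBasis (𝕜 := ℝ) (by simp) f
  have hr : min m (Fintype.card Y) ≤ m := min_le_left _ _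
  have hcoef : ∀ y (j : Fin m), min m (Fintype.card Y) ≤ j → inner ℝ (b j) (col y) = 0 := by
    intro y j hj
    have hy : (e y : ℕ) < j := by have := (e y).2; have := j.2; omega
    have hcol : col y = f ⟨e y, hy.trans j.2⟩ := by
      simp only [f, dif_pos (e y).isLt, Fin.eta, Equiv.symm_apply_apply]
    rw [hcol]
    exact gramSchmidtOrthonormalBasis_inv_triangular _ _ hy
  refine ⟨fun s => b (s.castLE hr), fun s y => inner ℝ (b (s.castLE hr)) (col y),
    b.orthonormal.comp _ (Fin.castLE_injective hr), fun x y => ?_⟩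
  calc M x y = (∑ j, inner ℝ (b j) (col y) • b j) x := by rw [b.sum_repr']
    _ = ∑ j, b j x * inner ℝ (b j) (col y) := by simp [mul_comm]
    _ = _ := (Fin.sum_castLE_eq_sum_of_eq_zero hr _ fun j hj => by simp [hcoef y j hj]).symm

def ttr1NumTerms (d : ℕ) (n : Fin d → ℕ) : ℕ :=
  ∏ k ∈ Finset.univ.filter (fun k : Fin d => (k : ℕ) < d - 1),
    min (n k) (∏ j ∈ Finset.univ.filter (fun j : Fin d => k < j), n j)

theorem ttr1NumTerms_one (n : Fin 1 → ℕ) : ttr1NumTerms 1 n = 1 := by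
  simp [ttr1NumTerms]

theorem ttr1NumTerms_succ {d : ℕ} (hd : 0 < d) (n : Fin (d + 1) → ℕ) :
    ttr1NumTerms (d + 1) n
      = min (n 0) (∏ k : Fin d, n k.succ) * ttr1NumTerms d (fun k => n k.succ) := by
  simp only [ttr1NumTerms, prod_filter, Fin.prod_univ_succ, filter_lt_eq_Ioi, Fin.prod_Ioi_zero,
    Fin.prod_Ioi_succ, Fin.val_zero, Fin.val_succ, Nat.add_sub_cancel,
    Nat.add_lt_iff_lt_sub_right, hd, if_true]

def HasOrthRankOneDecomposition {d : ℕ} {n : Fin d → ℕ} (J : Type*) [Fintype J]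
    (A : ((k : Fin d) → Fin (n k)) → ℝ) : Prop :=
  ∃ (σ : J → ℝ) (a : (k : Fin d) → J → Fin (n k) → ℝ),
    (∀ j, 0 ≤ σ j) ∧
    (∀ k j, ∑ x, (a k j x) ^ 2 = 1) ∧
    (∀ j j', j ≠ j' → ∑ i : ((k : Fin d) → Fin (n k)),
      (∏ k, a k j (i k)) * (∏ k, a k j' (i k)) = 0) ∧
    (∀ i, A i = ∑ j, σ j * ∏ k, a k j (i k))

namespace HasOrthRankOneDecomposition

variable {d : ℕ} {J J' : Type*} [Fintype J] [Fintype J']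

theorem of_equiv {n : Fin d → ℕ} {A : ((k : Fin d) → Fin (n k)) → ℝ} (e : J ≃ J')
    (h : HasOrthRankOneDecomposition J A) : HasOrthRankOneDecomposition J' A := by
  obtain ⟨σ, a, hσ, ha, horth, hA⟩ := h
  refine ⟨σ ∘ e.symm, fun k => a k ∘ e.symm, fun j => hσ _, fun k j => ha k _,
    fun j j' hne => horth _ _ (e.symm.injective.ne hne), fun i => ?_⟩
  rw [hA i, ← e.symm.sum_comp]
  rfl

theorem fin_one {n : Fin 1 → ℕ} (hn : 0 < n 0) (A : ((k : Fin 1) → Fin (n k)) → ℝ) :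
    HasOrthRankOneDecomposition (Fin 1) A := by
  have : NeZero (n 0) := ⟨hn.ne'⟩
  let v : EuclideanSpace ℝ (Fin (n 0)) := WithLp.toLp 2 fun x => A (Fin.cons x fun k => k.elim0)
  obtain ⟨u, hu, hv⟩ := exists_norm_eq_one_and_eq_norm_smul v
  refine ⟨fun _ => ‖v‖, Fin.cons (fun _ => u) fun k => k.elim0, fun _ => norm_nonneg v, ?_,
    fun j j' hne => absurd (Subsingleton.elim j j') hne, fun i => ?_⟩
  · intro k j
    rw [Subsingleton.elim k 0]
    simpa [hu] using (EuclideanSpace.real_norm_sq_eq u).symm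
  · have hi : i = Fin.cons (i 0) fun k => k.elim0 := by
      rw [← Fin.cons_self_tail i]; congr; exact Subsingleton.elim _ _
    rw [Fin.sum_univ_one, Fin.prod_univ_one, hi]
    simpa using congrFun (congrArg WithLp.ofLp hv) (i 0)

theorem cons {n : Fin (d + 1) → ℕ}
    (h : ∀ C : ((k : Fin d) → Fin (n k.succ)) → ℝ, HasOrthRankOneDecomposition J C)
    (A : ((k : Fin (d + 1)) → Fin (n k)) → ℝ) :
    HasOrthRankOneDecomposition
      (Fin (min (n 0) (Fintype.card ((k : Fin d) → Fin (n k.succ)))) × J) A := by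
  obtain ⟨u, w, hu, hM⟩ := exists_orthonormal_factorization fun x y => A (Fin.cons x y)
  choose τ b hτ hb horth hw using fun s => h (w s)
  refine ⟨fun j => τ j.1 j.2, Fin.cons (fun j => u j.1) fun k j => b j.1 k j.2,
    fun j => hτ _ _, ?_, ?_, fun i => ?_⟩
  · intro k j
    induction k using Fin.cases with
    | zero => simpa [sq] using hu.sum_mul_eq_ite j.1 j.1
    | succ k => exact hb _ k _
  · rintro ⟨s, t⟩ ⟨s', t'⟩ hne
    rw [sum_prod_mul_prod_eq_prod_sum_mul, Fin.prod_univ_succ]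
    simp only [Fin.cons_zero, Fin.cons_succ]
    by_cases hs : s = s'
    · subst hs
      rw [← sum_prod_mul_prod_eq_prod_sum_mul, horth s t t' fun ht => hne (by rw [ht]), mul_zero]
    · rw [hu.sum_mul_eq_ite, if_neg hs, zero_mul]
  · rw [← Fin.cons_self_tail i, hM, Fintype.sum_prod_type]
    refine sum_congr rfl fun s _ => ?_
    rw [hw, mul_sum]
    refine sum_congr rfl fun t _ => ?_
    simp only [Fin.prod_univ_succ, Fin.cons_zero, Fin.cons_succ]
    ring

end HasOrthRankOneDecomposition

theorem hasOrthRankOneDecomposition_ttr1NumTerms (d : ℕ) (hd : 1 ≤ d) (n : Fin d → ℕ)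
    (hn : ∀ k, 0 < n k) (A : ((k : Fin d) → Fin (n k)) → ℝ) :
    HasOrthRankOneDecomposition (Fin (ttr1NumTerms d n)) A := by
  induction d, hd using Nat.le_induction with
  | base =>
    exact (HasOrthRankOneDecomposition.fin_one (hn 0) A).of_equiv
      (finCongr (ttr1NumTerms_one n).symm)
  | succ d hd ih =>
    refine (HasOrthRankOneDecomposition.cons (fun C => ih _ (fun k => hn k.succ) C) A).of_equiv
      (finProdFinEquiv.trans (finCongr ?_))
    rw [ttr1NumTerms_succ hd]
    simp

/-- Every d-way real tensor decomposes into N = ∏_{k=1}^{d-1} min(n_k, n_{k+1}⋯n_d)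
orthogonal rank-1 terms with nonnegative weights and unit-norm mode vectors; in
particular its orthogonal rank is at most N. -/
theorem ttr1_decomposition (d : ℕ) (hd : 2 ≤ d) (n : Fin d → ℕ) (hn : ∀ k, 0 < n k)
    (N : ℕ)
    (hN : N = ∏ k ∈ Finset.univ.filter (fun k : Fin d => (k : ℕ) < d - 1),
        min (n k) (∏ j ∈ Finset.univ.filter (fun j : Fin d => k < j), n j))
    (A : ((k : Fin d) → Fin (n k)) → ℝ) :
    ∃ (σ : Fin N → ℝ) (a : (k : Fin d) → Fin N → Fin (n k) → ℝ),
      (∀ j, 0 ≤ σ j) ∧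
      (∀ (k : Fin d) (j : Fin N), ∑ x : Fin (n k), (a k j x) ^ 2 = 1) ∧
      (∀ j j' : Fin N, j ≠ j' →
        ∑ i : ((k : Fin d) → Fin (n k)),
          (∏ k : Fin d, a k j (i k)) * (∏ k : Fin d, a k j' (i k)) = 0) ∧
      (∀ i : ((k : Fin d) → Fin (n k)), A i = ∑ j : Fin N, σ j * ∏ k : Fin d, a k j (i k)) := by
  subst hN
  exact hasOrthRankOneDecomposition_ttr1NumTerms d (by omega) n hn A
end

section
/- Every 3-way real tensor A of size n₁×n₂×n₃ admits a tensor-train rank-1 decomposition: setting r₀ = min(n₁, n₂·n₃) and r₁ = min(n₂, n₃), there exist nonnegative reals σ̃_{ij} (1 ≤ i ≤ r₀, 1 ≤ j ≤ r₁), an orthonormal family (u_i)_{i=1}^{r₀} in ℝ^{n₁}, and for each i orthonormal families (b_{ij})_{j=1}^{r₁} in ℝ^{n₂} and (c_{ij})_{j=1}^{r₁} in ℝ^{n₃}, such that A = ∑_{i=1}^{r₀} ∑_{j=1}^{r₁} σ̃_{ij} · (u_i ∘ b_{ij} ∘ c_{ij}). -/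
/-!
Unfold `A` along its first mode into an `n₁ × n₂n₃` matrix and take a singular value
decomposition; each right singular vector, scaled by its singular value and reshaped into an
`n₂ × n₃` matrix, again has a singular value decomposition, and substituting it gives the
decomposition. The SVD of `T : E → F` with `dim F ≤ dim E` comes from an orthonormal eigenbasis
`(uᵢ)` of `T T*`: the vectors `T* uᵢ` are pairwise orthogonal, and `T x = ∑ ⟪T* uᵢ, x⟫ uᵢ`.
-/

open Module InnerProductSpace

section

variable {𝕜 E : Type*} [RCLike 𝕜] [NormedAddCommGroup E] [InnerProductSpace 𝕜 E]
  [FiniteDimensional 𝕜 E]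

theorem exists_orthonormal_norm_smul_eq_of_pairwise_inner_eq_zero {ι : Type*} [Fintype ι]
    (hι : Fintype.card ι ≤ finrank 𝕜 E) {w : ι → E} (hw : Pairwise fun i j => ⟪w i, w j⟫_𝕜 = 0) :
    ∃ v : ι → E, Orthonormal 𝕜 v ∧ ∀ i, w i = (‖w i‖ : 𝕜) • v i := by
  -- Pad `ι` to `finrank 𝕜 E` indices, so that the normalized nonzero `w i` extend to an
  -- orthonormal basis indexed by `ι ⊕ κ`; its vectors at `inl i` with `w i = 0` fill the gaps.
  let κ := Fin (finrank 𝕜 E - Fintype.card ι)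
  have hcard : finrank 𝕜 E = Fintype.card (ι ⊕ κ) := by simp [κ]; omega
  let v₀ : ι ⊕ κ → E := Sum.elim (fun i => (‖w i‖⁻¹ : 𝕜) • w i) 0
  have hv₀ : Orthonormal 𝕜 (({x | v₀ x ≠ 0} : Set (ι ⊕ κ)).domRestrict v₀) := by
    refine ⟨?_, ?_⟩
    · rintro ⟨i | k, hx⟩
      · exact norm_smul_inv_norm (by simpa [v₀] using hx)
      · exact absurd rfl hx
    · rintro ⟨i | k, hx⟩ ⟨j | l, hy⟩ hxy
      · have hij : i ≠ j := fun h => hxy (by simp [h])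
        simp [v₀, inner_smul_left, inner_smul_right, hw hij]
      all_goals first | exact absurd rfl hx | exact absurd rfl hy
  obtain ⟨b, hb⟩ := hv₀.exists_orthonormalBasis_extension_of_card_eq hcard
  refine ⟨fun i => b (Sum.inl i), b.orthonormal.comp _ Sum.inl_injective, fun i => ?_⟩
  by_cases hi : w i = 0
  · simp [hi]
  · have hbi := hb (Sum.inl i) (by simpa [v₀] using hi)
    simp only [hbi, v₀, Sum.elim_inl, smul_smul]
    rw [mul_inv_cancel₀ (by simpa using hi), one_smul]

variable {F : Type*} [NormedAddCommGroup F] [InnerProductSpace 𝕜 F] [FiniteDimensional 𝕜 F]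

theorem LinearMap.exists_svd_of_finrank_le (T : E →ₗ[𝕜] F) {n : ℕ} (hn : finrank 𝕜 F = n)
    (hle : n ≤ finrank 𝕜 E) :
    ∃ (σ : Fin n → ℝ) (u : OrthonormalBasis (Fin n) 𝕜 F) (v : Fin n → E),
      (∀ i, 0 ≤ σ i) ∧ Orthonormal 𝕜 v ∧ ∀ x, T x = ∑ i, ((σ i : 𝕜) * ⟪v i, x⟫_𝕜) • u i := by
  let u := T.isSymmetric_self_comp_adjoint.eigenvectorBasis hn
  have horth : Pairwise fun i j => ⟪adjoint T (u i), adjoint T (u j)⟫_𝕜 = 0 := fun i j hij => by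
    dsimp only
    rw [adjoint_inner_right, ← LinearMap.comp_apply, LinearMap.IsSymmetric.apply_eigenvectorBasis,
      inner_smul_left, u.orthonormal.2 hij, mul_zero]
  obtain ⟨v, hv, hTv⟩ :=
    exists_orthonormal_norm_smul_eq_of_pairwise_inner_eq_zero (by simpa [hn] using hle) horth
  refine ⟨fun i => ‖adjoint T (u i)‖, u, v, fun i => norm_nonneg _, hv, fun x => ?_⟩
  calc T x = ∑ i, ⟪u i, T x⟫_𝕜 • u i := (u.sum_repr' (T x)).symm
    _ = _ := by
      congr! 2 with i
      rw [← adjoint_inner_left, hTv i, inner_smul_left, RCLike.conj_ofReal]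

end

namespace Matrix

variable {𝕜 m n : Type*} [RCLike 𝕜] [Fintype m] [Fintype n] [DecidableEq n]

theorem exists_svd_of_card_le {r : ℕ} (hr : r = Fintype.card m)
    (h : Fintype.card m ≤ Fintype.card n) (M : Matrix m n 𝕜) :
    ∃ (σ : Fin r → ℝ) (u : Fin r → EuclideanSpace 𝕜 m) (v : Fin r → EuclideanSpace 𝕜 n),
      (∀ i, 0 ≤ σ i) ∧ Orthonormal 𝕜 u ∧ Orthonormal 𝕜 v ∧
      ∀ x y, M x y = ∑ i, σ i * u i x * star (v i y) := by
  obtain ⟨σ, u, v, hσ, hv, hM⟩ :=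
    (toLpLin 2 2 M).exists_svd_of_finrank_le (n := r) (by simp [hr]) (by simpa [hr] using h)
  refine ⟨σ, u, v, hσ, u.orthonormal, hv, fun x y => ?_⟩
  have hentry := congrArg (· x) (hM (EuclideanSpace.single y 1))
  simpa [EuclideanSpace.inner_single_right, toLpLin_apply, mul_comm, mul_left_comm] using hentry

variable [DecidableEq m]

theorem exists_svd {r : ℕ} (hr : r = min (Fintype.card m) (Fintype.card n)) (M : Matrix m n 𝕜) :
    ∃ (σ : Fin r → ℝ) (u : Fin r → EuclideanSpace 𝕜 m) (v : Fin r → EuclideanSpace 𝕜 n),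
      (∀ i, 0 ≤ σ i) ∧ Orthonormal 𝕜 u ∧ Orthonormal 𝕜 v ∧
      ∀ x y, M x y = ∑ i, σ i * u i x * star (v i y) := by
  rcases le_total (Fintype.card m) (Fintype.card n) with h | h
  · exact exists_svd_of_card_le (by omega) h M
  · obtain ⟨σ, v, u, hσ, hv, hu, hM⟩ := exists_svd_of_card_le (r := r) (by omega) h Mᴴ
    refine ⟨σ, u, v, hσ, hu, hv, fun x y => ?_⟩
    have hentry := congrArg star (hM y x)
    simpa [star_sum, mul_comm, mul_left_comm] using hentry

end Matrix

theorem EuclideanSpace.orthonormal_iff_sum {ι κ : Type*} [Fintype κ]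
    (u : ι → EuclideanSpace ℝ κ) :
    Orthonormal ℝ u ↔
      (∀ i, ∑ x, u i x ^ 2 = 1) ∧ ∀ i i', i ≠ i' → ∑ x, u i x * u i' x = 0 := by
  simp [Orthonormal, EuclideanSpace.norm_eq, Pairwise, PiLp.inner_apply, mul_comm]

theorem ttr1_decomposition_three_way_general (n₁ n₂ n₃ : ℕ) (r₀ r₁ : ℕ) (hr₀ : r₀ = min n₁ (n₂ * n₃)) (hr₁ : r₁ = min n₂ n₃)
    (A : Fin n₁ × Fin n₂ × Fin n₃ → ℝ) :
    ∃ (σ : Fin r₀ → Fin r₁ → ℝ) (u : Fin r₀ → Fin n₁ → ℝ)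
      (b : Fin r₀ → Fin r₁ → Fin n₂ → ℝ) (c : Fin r₀ → Fin r₁ → Fin n₃ → ℝ),
      (∀ i j, 0 ≤ σ i j) ∧
      (∀ i, ∑ x : Fin n₁, (u i x) ^ 2 = 1) ∧
      (∀ i i' : Fin r₀, i ≠ i' → ∑ x : Fin n₁, u i x * u i' x = 0) ∧
      (∀ i j, ∑ y : Fin n₂, (b i j y) ^ 2 = 1) ∧
      (∀ (i : Fin r₀) (j j' : Fin r₁), j ≠ j' → ∑ y : Fin n₂, b i j y * b i j' y = 0) ∧
      (∀ i j, ∑ z : Fin n₃, (c i j z) ^ 2 = 1) ∧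
      (∀ (i : Fin r₀) (j j' : Fin r₁), j ≠ j' → ∑ z : Fin n₃, c i j z * c i j' z = 0) ∧
      (∀ (x : Fin n₁) (y : Fin n₂) (z : Fin n₃),
        A (x, y, z) = ∑ i : Fin r₀, ∑ j : Fin r₁, σ i j * u i x * b i j y * c i j z) := by
  obtain ⟨σ₀, u, v, -, hu, -, hA⟩ := Matrix.exists_svd (𝕜 := ℝ) (r := r₀) (by simp [hr₀])
    (Matrix.of fun (x : Fin n₁) p => A (x, finProdFinEquiv.symm p))
  choose σ b c hσ hb hc hv using fun i => Matrix.exists_svd (𝕜 := ℝ) (r := r₁) (by simp [hr₁])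
    (Matrix.of fun (y : Fin n₂) (z : Fin n₃) => σ₀ i * v i (finProdFinEquiv (y, z)))
  simp only [Matrix.of_apply, star_trivial, RCLike.ofReal_real_eq_id, id_eq] at hA hv
  rw [EuclideanSpace.orthonormal_iff_sum] at hu
  simp only [EuclideanSpace.orthonormal_iff_sum] at hb hc
  refine ⟨σ, fun i => u i, fun i j => b i j, fun i j => c i j, hσ, hu.1, hu.2, fun i => (hb i).1,
    fun i => (hb i).2, fun i => (hc i).1, fun i => (hc i).2, fun x y z => ?_⟩
  calc A (x, y, z) = A (x, finProdFinEquiv.symm (finProdFinEquiv (y, z))) := by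
        rw [Equiv.symm_apply_apply]
    _ = ∑ i, σ₀ i * u i x * v i (finProdFinEquiv (y, z)) := hA _ _
    _ = ∑ i, ∑ j, σ i j * u i x * b i j y * c i j z := by
        refine Finset.sum_congr rfl fun i _ => ?_
        rw [mul_right_comm, hv, Finset.sum_mul]
        exact Finset.sum_congr rfl fun j _ => by ring

/-- Every 3-way real tensor admits a tensor-train rank-1 (TTr1) decomposition. -/
theorem ttr1_decomposition_three_way (n₁ n₂ n₃ : ℕ) (h₁ : 0 < n₁) (h₂ : 0 < n₂) (h₃ : 0 < n₃)
    (r₀ r₁ : ℕ) (hr₀ : r₀ = min n₁ (n₂ * n₃)) (hr₁ : r₁ = min n₂ n₃)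
    (A : Fin n₁ × Fin n₂ × Fin n₃ → ℝ) :
    ∃ (σ : Fin r₀ → Fin r₁ → ℝ) (u : Fin r₀ → Fin n₁ → ℝ)
      (b : Fin r₀ → Fin r₁ → Fin n₂ → ℝ) (c : Fin r₀ → Fin r₁ → Fin n₃ → ℝ),
      (∀ i j, 0 ≤ σ i j) ∧
      (∀ i, ∑ x : Fin n₁, (u i x) ^ 2 = 1) ∧
      (∀ i i' : Fin r₀, i ≠ i' → ∑ x : Fin n₁, u i x * u i' x = 0) ∧
      (∀ i j, ∑ y : Fin n₂, (b i j y) ^ 2 = 1) ∧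
      (∀ (i : Fin r₀) (j j' : Fin r₁), j ≠ j' → ∑ y : Fin n₂, b i j y * b i j' y = 0) ∧
      (∀ i j, ∑ z : Fin n₃, (c i j z) ^ 2 = 1) ∧
      (∀ (i : Fin r₀) (j j' : Fin r₁), j ≠ j' → ∑ z : Fin n₃, c i j z * c i j' z = 0) ∧
      (∀ (x : Fin n₁) (y : Fin n₂) (z : Fin n₃),
        A (x, y, z) = ∑ i : Fin r₀, ∑ j : Fin r₁, σ i j * u i x * b i j y * c i j z) :=
  ttr1_decomposition_three_way_general n₁ n₂ n₃ r₀ r₁ hr₀ hr₁ A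
end
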